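/- The function f(z) = (x₁x₂⋯x₇ − 1) − Σ_{j=1}^7 ( (∏_{i∈{0,…,7}, i≠0, i≠j} x_i) − 1 )·e_j satisfies the left octonionic Cauchy–Riemann equation D f = 0 on O, and z* = 1 + e₁ + e₂ + ⋯ + e₇ is a zero of f. -/

import Mathlib

noncomputable section

/-- Octonions as the Cayley–Dickson double of the quaternions. -/
abbrev O := Quaternion ℝ × Quaternion ℝ

/-- Cayley–Dickson multiplication. -/
def omul (x y : O) : O := (x.1 * y.1 - y.2 * star x.2, star x.1 * y.2 + y.1 * x.2)

/-- Octonionic conjugation. -/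
def oconj (x : O) : O := (star x.1, -x.2)

/-- The unit 1 = (1,0). -/
def oone : O := (1, 0)

/-- Euclidean norm. -/
def onorm (x : O) : ℝ := Real.sqrt (‖x.1‖^2 + ‖x.2‖^2)

def qi : Quaternion ℝ := ⟨0,1,0,0⟩
def qj : Quaternion ℝ := ⟨0,0,1,0⟩

/-- The standard octonion basis 1, e₁, …, e₇ with e₁ = (i,0), e₂ = (j,0), e₃ = (0,1),
    e₄ = e₁e₂, e₅ = e₁e₃, e₆ = e₂e₃, e₇ = (e₁e₂)e₃. -/
def basis8 : Fin 8 → O := ![oone, (qi,0), (qj,0), ((0:Quaternion ℝ),1),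
  omul (qi,0) (qj,0), omul (qi,0) (0,1), omul (qj,0) (0,1), omul (omul (qi,0) (qj,0)) (0,1)]

/-- The real coordinates x₀,…,x₇ of z = x₀ + Σ xᵢeᵢ with respect to `basis8`. -/
def coord : Fin 8 → O → ℝ :=
  ![fun z => z.1.re, fun z => z.1.imI, fun z => z.1.imJ, fun z => z.2.re,
    fun z => z.1.imK, fun z => -z.2.imI, fun z => -z.2.imJ, fun z => -z.2.imK]

/-- Left octonionic Cauchy–Riemann operator D f = ∂f/∂x₀ + Σᵢ eᵢ·(∂f/∂xᵢ). -/
def Dleft (f : O → O) (z : O) : O :=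
  fderiv ℝ f z (basis8 0) + ∑ i : Fin 7, omul (basis8 i.succ) (fderiv ℝ f z (basis8 i.succ))

/-- Right octonionic Cauchy–Riemann operator f D = ∂f/∂x₀ + Σᵢ (∂f/∂xᵢ)·eᵢ. -/
def Dright (f : O → O) (z : O) : O :=
  fderiv ℝ f z (basis8 0) + ∑ i : Fin 7, omul (fderiv ℝ f z (basis8 i.succ)) (basis8 i.succ)

/-- Fueter polynomials Zᵢ(z) = xᵢ − x₀eᵢ. -/
def Zp (i : Fin 8) (z : O) : O := coord i z • oone - coord 0 z • basis8 i
/-- Hempfling's function f(z) = (x₁⋯x₇ − 1) − Σⱼ (x₀⋯x̂ⱼ⋯x₇ − 1)eⱼ. -/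
def hempfling (z : O) : O :=
  ((∏ i : Fin 7, coord i.succ z) - 1) • oone
    - ∑ j : Fin 7, ((∏ i ∈ Finset.univ.erase (j.succ : Fin 8), coord i z) - 1) • basis8 j.succ

/-!
Write `P j = ∏_{i ≠ j} xᵢ` (`prodCoordExcept j`) and `εⱼ eⱼ` for `signedBasis j`
(`ε₀ = 1`, `εⱼ = -1` otherwise), so that `f = ∑ⱼ (P j - 1) εⱼ eⱼ`. Then
`∂ₖ f = ∑_{j ≠ k} P_{jk} εⱼ eⱼ` with `P_{jk} = ∏_{i ≠ j, k} xᵢ` symmetric in `j, k`, and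
`D f = ∑_{j ≠ k} P_{jk} eₖ (εⱼ eⱼ)`. The product `eₖ (εⱼ eⱼ)` is antisymmetric in `(j, k)`
for `j ≠ k`: for `j, k ≥ 1` because distinct imaginary units anticommute, and
`e₀ (εⱼ eⱼ) = -eⱼ = -(eⱼ (ε₀ e₀))`. So the terms of `D f` cancel in pairs.
At `z* = ∑ₖ eₖ` every coordinate is `1`, so every `P j - 1` vanishes.
-/

open Finset Quaternion

lemma coord_basis8 (i k : Fin 8) : coord i (basis8 k) = if i = k then 1 else 0 := by
  -- unfolding `qi`, `qj` instead would expose `QuaternionAlgebra` literals that the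
  -- `Quaternion` simp lemmas do not match
  have hqi : qi.re = 0 ∧ qi.imI = 1 ∧ qi.imJ = 0 ∧ qi.imK = 0 := ⟨rfl, rfl, rfl, rfl⟩
  have hqj : qj.re = 0 ∧ qj.imI = 0 ∧ qj.imJ = 1 ∧ qj.imK = 0 := ⟨rfl, rfl, rfl, rfl⟩
  fin_cases i <;> fin_cases k <;>
    simp [coord, basis8, omul, oone, hqi, hqj, re_mul, imI_mul, imJ_mul, imK_mul]

def coordL (i : Fin 8) : O →L[ℝ] ℝ :=
  LinearMap.toContinuousLinearMap
    { toFun := coord i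
      map_add' := fun x y => by fin_cases i <;> simp [coord] <;> ring
      map_smul' := fun r x => by fin_cases i <;> simp [coord] }

@[simp] lemma coordL_apply (i : Fin 8) (z : O) : coordL i z = coord i z := rfl

def omulLeft (x : O) : O →ₗ[ℝ] O where
  toFun := omul x
  map_add' y y' := by ext <;> simp [omul, mul_add, add_mul] <;> ring
  map_smul' r y := by ext <;> simp [omul] <;> ring

@[simp] lemma omulLeft_apply (x y : O) : omulLeft x y = omul x y := rfl

lemma basis8_zero : basis8 0 = oone := rfl

lemma oone_omul (x : O) : omul oone x = x := by
  simp [omul, oone]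

lemma omul_oone (x : O) : omul x oone = x := by
  simp [omul, oone]

lemma omul_add_omul_swap (x y : O) (hx : coord 0 x = 0) (hy : coord 0 y = 0) :
    omul x y + omul y x = (-2 * ∑ i, coord i x * coord i y) • oone := by
  simp only [coord, Matrix.cons_val_zero] at hx hy
  ext <;>
    simp [omul, oone, coord, Fin.sum_univ_eight, re_mul, imI_mul, imJ_mul, imK_mul, hx, hy] <;>
    ring

lemma omul_basis8_anticomm {j k : Fin 8} (hj : j ≠ 0) (hk : k ≠ 0) (hjk : j ≠ k) :
    omul (basis8 j) (basis8 k) = -omul (basis8 k) (basis8 j) := by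
  have h := omul_add_omul_swap (basis8 j) (basis8 k)
    (by simp [coord_basis8, hj.symm]) (by simp [coord_basis8, hk.symm])
  simp only [coord_basis8, mul_ite, mul_one, mul_zero, sum_ite_eq', mem_univ, if_neg hjk.symm,
    ite_self, zero_smul] at h
  exact eq_neg_of_add_eq_zero_left h

def signedBasis (j : Fin 8) : O := if j = 0 then basis8 0 else -basis8 j

lemma omul_basis8_signedBasis_antisymm {j k : Fin 8} (h : j ≠ k) :
    omul (basis8 k) (signedBasis j) = -omul (basis8 j) (signedBasis k) := by
  have hneg : ∀ x y : O, omul x (-y) = -omul x y := fun x => map_neg (omulLeft x)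
  rcases eq_or_ne j 0 with rfl | hj
  · simp [signedBasis, h.symm, hneg, oone_omul, omul_oone, basis8_zero]
  rcases eq_or_ne k 0 with rfl | hk
  · simp [signedBasis, hj, hneg, oone_omul, omul_oone, basis8_zero]
  simp [signedBasis, hj, hk, hneg, omul_basis8_anticomm hk hj h.symm]

def prodCoordExcept (j : Fin 8) (z : O) : ℝ := ∏ i ∈ univ.erase j, coord i z

lemma Fin.univ_erase_zero (n : ℕ) :
    (univ : Finset (Fin (n + 1))).erase 0 = univ.map (Fin.succEmb n) := by
  rw [Fin.univ_succ, erase_cons]; rfl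

lemma hempfling_eq_sum :
    hempfling = fun z => ∑ j, (prodCoordExcept j z - 1) • signedBasis j := by
  ext1 z
  simp [hempfling, Fin.sum_univ_succ, prodCoordExcept, signedBasis, Fin.univ_erase_zero,
    Fin.succ_ne_zero, sub_eq_add_neg, basis8_zero]

lemma fderiv_hempfling_basis8 (z : O) (k : Fin 8) :
    fderiv ℝ hempfling z (basis8 k) =
      ∑ j, (if k = j then 0 else ∏ i ∈ (univ.erase j).erase k, coord i z) • signedBasis j := by
  have h : HasFDerivAt hempfling (∑ j, (∑ i ∈ univ.erase j,
      (∏ l ∈ (univ.erase j).erase i, coord l z) • coordL i).smulRight (signedBasis j)) z := by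
    rw [hempfling_eq_sum]
    exact HasFDerivAt.fun_sum fun j _ => ((HasFDerivAt.finsetProd fun i _ =>
      (coordL i).hasFDerivAt).sub_const 1).smul_const _
  simp only [h.fderiv, _root_.sum_apply, ContinuousLinearMap.smulRight_apply,
    _root_.smul_apply, coordL_apply, coord_basis8, smul_eq_mul, mul_ite, mul_one,
    mul_zero, sum_ite_eq', mem_erase, mem_univ, and_true, ne_eq, ite_not, ite_smul, zero_smul]

lemma Dleft_eq_sum_omul (f : O → O) (z : O) :
    Dleft f z = ∑ k, omul (basis8 k) (fderiv ℝ f z (basis8 k)) := by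
  rw [Fin.sum_univ_succ, Dleft, basis8_zero, oone_omul]

lemma sum_sum_eq_zero_of_antisymm {ι M : Type*} [AddCommGroup M] [IsAddTorsionFree M]
    (s : Finset ι) (a : ι → ι → M) (h : ∀ i j, a i j = -a j i) :
    ∑ i ∈ s, ∑ j ∈ s, a i j = 0 := by
  rw [← two_nsmul_eq_zero, two_nsmul]
  nth_rw 2 [sum_comm]
  rw [← sum_add_distrib]
  refine sum_eq_zero fun i _ => ?_
  rw [← sum_add_distrib]
  exact sum_eq_zero fun j _ => by rw [h i j, neg_add_cancel]

lemma Dleft_hempfling (z : O) : Dleft hempfling z = 0 := by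
  have : IsAddTorsionFree O := IsAddTorsionFree.of_isTorsionFree ℝ O
  simp only [Dleft_eq_sum_omul, fderiv_hempfling_basis8, ← omulLeft_apply, map_sum, map_smul]
  refine sum_sum_eq_zero_of_antisymm _ _ fun k j => ?_
  by_cases h : k = j
  · subst h; simp
  · rw [if_neg h, if_neg (Ne.symm h), erase_right_comm, omulLeft_apply, omulLeft_apply,
      omul_basis8_signedBasis_antisymm (Ne.symm h), smul_neg]

lemma coord_sum_basis8 (i : Fin 8) : coord i (∑ k, basis8 k) = 1 := by
  rw [← coordL_apply, map_sum]
  simp [coord_basis8]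

lemma hempfling_sum_basis8 : hempfling (∑ k, basis8 k) = 0 := by
  simp [hempfling_eq_sum, prodCoordExcept, coord_sum_basis8]

/-- Hempfling's function is left octonion-monogenic and vanishes at z* = 1 + e₁ + ⋯ + e₇. -/
theorem hempfling_monogenic_and_zero :
    (∀ z : O, Dleft hempfling z = 0) ∧
    hempfling (oone + ∑ j : Fin 7, basis8 j.succ) = 0 := by
  refine ⟨Dleft_hempfling, ?_⟩
  rw [← basis8_zero, ← Fin.sum_univ_succ]
  exact hempfling_sum_basis8
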